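/- arXiv:1207.4212 — 7 statements merged into one kernel-verified Lean document; each statement's English description precedes it below -/
import Mathlib

section
/- Let A = 1/(2(1 + π²/3)) and λ ≥ 0. Define the sequence (C_l)_{l≥0} by C_0 = 0 and C_l = A · (l!)^λ / l² for l ≥ 1. Then Σ_{l=0}^{m} C_l · C_{m−l} ≤ C_m for every integer m ≥ 0. -/
/-!
Since `l! (m-l)! ∣ m!`, each product `C_l C_{m-l}` is at most `A² (m!)^λ / (l² (m-l)²)`.
Writing `1/(l(m-l)) = (1/l + 1/(m-l))/m` and using `(x+y)² ≤ 2(x²+y²)`, the convolution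
`∑ 1/(l² (m-l)²)` is at most `(2/m²) · 2 ∑_{l≥1} 1/l² ≤ 8/m²`, so the whole sum is at most
`8A² (m!)^λ / m²`, which is `≤ C_m` because `8A ≤ 1`.
-/

open Finset Nat

lemma inv_sq_mul_inv_sq_le {a b : ℝ} (ha : 0 < a) (hb : 0 < b) :
    (a ^ 2)⁻¹ * (b ^ 2)⁻¹ ≤ 2 / (a + b) ^ 2 * ((a ^ 2)⁻¹ + (b ^ 2)⁻¹) := by
  have hab : (a * b)⁻¹ = (a⁻¹ + b⁻¹) / (a + b) := by field_simp; ring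
  calc (a ^ 2)⁻¹ * (b ^ 2)⁻¹ = ((a⁻¹ + b⁻¹) / (a + b)) ^ 2 := by rw [← hab]; ring
    _ = (a⁻¹ + b⁻¹) ^ 2 / (a + b) ^ 2 := div_pow _ _ _
    _ ≤ 2 * ((a ^ 2)⁻¹ + (b ^ 2)⁻¹) / (a + b) ^ 2 := by
        gcongr
        rw [← inv_pow, ← inv_pow]
        nlinarith [sq_nonneg (a⁻¹ - b⁻¹)]
    _ = 2 / (a + b) ^ 2 * ((a ^ 2)⁻¹ + (b ^ 2)⁻¹) := by ring

lemma sum_Ioo_inv_sq_sub_eq (m : ℕ) :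
    ∑ l ∈ Ioo 0 m, (((m - l : ℕ) : ℝ) ^ 2)⁻¹ = ∑ l ∈ Ioo 0 m, ((l : ℝ) ^ 2)⁻¹ :=
  sum_nbij' (fun l => m - l) (fun l => m - l) (by simp; omega) (by simp; omega)
    (by simp; omega) (by simp; omega) (by simp)

lemma sum_Ioo_inv_sq_mul_inv_sq_sub_le (m : ℕ) :
    ∑ l ∈ Ioo 0 m, ((l : ℝ) ^ 2)⁻¹ * (((m - l : ℕ) : ℝ) ^ 2)⁻¹ ≤ 8 / (m : ℝ) ^ 2 := by
  have hterm : ∀ l ∈ Ioo 0 m, ((l : ℝ) ^ 2)⁻¹ * (((m - l : ℕ) : ℝ) ^ 2)⁻¹ ≤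
      2 / (m : ℝ) ^ 2 * (((l : ℝ) ^ 2)⁻¹ + (((m - l : ℕ) : ℝ) ^ 2)⁻¹) := by
    intro l hl
    rw [mem_Ioo] at hl
    have hsum : (l : ℝ) + ((m - l : ℕ) : ℝ) = m := by exact_mod_cast (by omega : l + (m - l) = m)
    rw [← hsum]
    exact inv_sq_mul_inv_sq_le (by exact_mod_cast hl.1) (by exact_mod_cast (by omega : 0 < m - l))
  have hsq : ∑ l ∈ Ioo 0 m, ((l : ℝ) ^ 2)⁻¹ ≤ 2 := by
    simpa using sum_Ioo_inv_sq_le (α := ℝ) 0 m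
  calc _ ≤ ∑ l ∈ Ioo 0 m, 2 / (m : ℝ) ^ 2 * (((l : ℝ) ^ 2)⁻¹ + (((m - l : ℕ) : ℝ) ^ 2)⁻¹) :=
        sum_le_sum hterm
    _ = 2 / (m : ℝ) ^ 2 * (2 * ∑ l ∈ Ioo 0 m, ((l : ℝ) ^ 2)⁻¹) := by
        rw [← mul_sum, sum_add_distrib, sum_Ioo_inv_sq_sub_eq, two_mul]
    _ ≤ 2 / (m : ℝ) ^ 2 * (2 * 2) := by gcongr
    _ = 8 / (m : ℝ) ^ 2 := by ring

lemma factorial_rpow_mul_factorial_sub_rpow_le {lam : ℝ} (hlam : 0 ≤ lam) {l m : ℕ}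
    (hlm : l ≤ m) : (l ! : ℝ) ^ lam * ((m - l)! : ℝ) ^ lam ≤ (m ! : ℝ) ^ lam := by
  rw [← Real.mul_rpow (by positivity) (by positivity)]
  refine Real.rpow_le_rpow (by positivity) ?_ hlam
  exact_mod_cast Nat.le_of_dvd m.factorial_pos (factorial_mul_factorial_dvd_factorial hlm)

lemma sum_range_succ_mul_sub_eq_sum_Ioo {R : Type*} [NonUnitalNonAssocSemiring R]
    (C : ℕ → R) (hC0 : C 0 = 0) (m : ℕ) :
    ∑ l ∈ range (m + 1), C l * C (m - l) = ∑ l ∈ Ioo 0 m, C l * C (m - l) := by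
  refine (sum_subset (fun l hl => ?_) fun l hl hl' => ?_).symm
  · simp only [mem_Ioo, mem_range] at hl ⊢
    omega
  · simp only [mem_Ioo, mem_range, not_and, not_lt] at hl hl'
    rcases Nat.eq_zero_or_pos l with rfl | hl0
    · rw [hC0, zero_mul]
    · rw [show m - l = 0 by omega, hC0, mul_zero]

lemma eight_mul_inv_two_mul_one_add_pi_sq_div_three_le_one :
    8 * (1 / (2 * (1 + Real.pi ^ 2 / 3))) ≤ 1 := by
  rw [mul_one_div, div_le_one (by positivity)]
  nlinarith [Real.pi_gt_three]

/-- Lemma 2.2 (key lemma) of the paper, case `C₀ = 0`: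
with `A = 1/(2(1+π²/3))` and `C_l = A (l!)^λ / l²` for `l ≥ 1`, `C₀ = 0`,
the sequence `(C_l)` satisfies `∑_{l=0}^m C_l C_{m-l} ≤ C_m`. -/
theorem stmt_4 (lam : ℝ) (hlam : 0 ≤ lam)
    (A : ℝ) (hA : A = 1 / (2 * (1 + Real.pi ^ 2 / 3)))
    (C : ℕ → ℝ)
    (hC0 : C 0 = 0)
    (hC : ∀ l : ℕ, 1 ≤ l → C l = A * (l.factorial : ℝ) ^ lam / (l : ℝ) ^ 2) :
    ∀ m : ℕ, ∑ l ∈ Finset.range (m + 1), C l * C (m - l) ≤ C m := by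
  intro m
  rw [sum_range_succ_mul_sub_eq_sum_Ioo C hC0]
  rcases Nat.eq_zero_or_pos m with rfl | hm
  · simp [hC0]
  have hA0 : 0 ≤ A := by rw [hA]; positivity
  have h8A : 8 * A ≤ 1 := hA ▸ eight_mul_inv_two_mul_one_add_pi_sq_div_three_le_one
  have hterm : ∀ l ∈ Ioo 0 m, C l * C (m - l) ≤
      A ^ 2 * (m ! : ℝ) ^ lam * (((l : ℝ) ^ 2)⁻¹ * (((m - l : ℕ) : ℝ) ^ 2)⁻¹) := by
    intro l hl
    rw [mem_Ioo] at hl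
    rw [hC l hl.1, hC (m - l) (by omega)]
    calc _ = A ^ 2 * ((l ! : ℝ) ^ lam * ((m - l)! : ℝ) ^ lam) *
          (((l : ℝ) ^ 2)⁻¹ * (((m - l : ℕ) : ℝ) ^ 2)⁻¹) := by ring
      _ ≤ _ := by gcongr; exact factorial_rpow_mul_factorial_sub_rpow_le hlam hl.2.le
  calc _ ≤ ∑ l ∈ Ioo 0 m,
        A ^ 2 * (m ! : ℝ) ^ lam * (((l : ℝ) ^ 2)⁻¹ * (((m - l : ℕ) : ℝ) ^ 2)⁻¹) :=
        sum_le_sum hterm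
    _ ≤ A ^ 2 * (m ! : ℝ) ^ lam * (8 / (m : ℝ) ^ 2) := by
        rw [← mul_sum]; gcongr; exact sum_Ioo_inv_sq_mul_inv_sq_sub_le m
    _ = 8 * A * (A * (m ! : ℝ) ^ lam / (m : ℝ) ^ 2) := by ring
    _ ≤ C m := by rw [hC m hm]; exact mul_le_of_le_one_left (by positivity) h8A
end

section
/- Let A = 1/(2(1 + π²/3)) and λ ≥ 0. Define the sequence (C_l)_{l≥0} by C_0 = A and C_l = A · (l!)^λ / l² for l ≥ 1. Then Σ_{l=0}^{m} C_l · C_{m−l} ≤ C_m for every integer m ≥ 0. -/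
/-!
For `1 ≤ l < m` we have `l! (m-l)! ≤ m!` and `1/(l(m-l))² ≤ (2/m²)(1/l² + 1/(m-l)²)`,
so `C_l C_{m-l} ≤ 2A C_m (1/l² + 1/(m-l)²)`; by Basel the interior terms of the
convolution sum to at most `2A (π²/3) C_m`. The two boundary terms contribute `2A C_m`,
and `2A (1 + π²/3) = 1` is exactly how `A` is chosen.
-/

open Finset Real

lemma one_div_sq_mul_sq_le {a b : ℝ} (ha : 0 < a) (hb : 0 < b) :
    1 / (a ^ 2 * b ^ 2) ≤ 2 / (a + b) ^ 2 * (1 / a ^ 2 + 1 / b ^ 2) := by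
  rw [div_add_div _ _ (by positivity) (by positivity), div_mul_div_comm,
    div_le_div_iff₀ (by positivity) (by positivity)]
  nlinarith [mul_nonneg (sq_nonneg (a - b)) (sq_nonneg (a * b))]

lemma sum_one_div_sq_le_pi_sq_div_six (s : Finset ℕ) :
    ∑ n ∈ s, 1 / (n : ℝ) ^ 2 ≤ π ^ 2 / 6 :=
  sum_le_hasSum s (fun _ _ => by positivity) hasSum_zeta_two

lemma sum_Ico_one_div_sq_add_le {m : ℕ} :
    ∑ l ∈ Ico 1 m, (1 / (l : ℝ) ^ 2 + 1 / ((m - l : ℕ) : ℝ) ^ 2) ≤ π ^ 2 / 3 := by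
  have hreflect : ∑ l ∈ Ico 1 m, 1 / ((m - l : ℕ) : ℝ) ^ 2 = ∑ l ∈ Ico 1 m, 1 / (l : ℝ) ^ 2 := by
    rw [sum_Ico_reflect (fun n => 1 / (n : ℝ) ^ 2) 1 (Nat.le_succ m), Nat.add_sub_cancel_left,
      Nat.add_sub_cancel]
  rw [sum_add_distrib, hreflect]
  linarith [sum_one_div_sq_le_pi_sq_div_six (Ico 1 m)]

lemma factorial_rpow_mul_factorial_rpow_le {l m : ℕ} (hlm : l ≤ m) {lam : ℝ} (hlam : 0 ≤ lam) :
    (l.factorial : ℝ) ^ lam * ((m - l).factorial : ℝ) ^ lam ≤ (m.factorial : ℝ) ^ lam := by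
  rw [← mul_rpow (by positivity) (by positivity)]
  gcongr
  exact_mod_cast Nat.le_of_dvd m.factorial_pos (Nat.factorial_mul_factorial_dvd_factorial hlm)

lemma sum_range_succ_mul_sub_eq {R : Type*} [CommSemiring R] (C : ℕ → R) {m : ℕ} (hm : 1 ≤ m) :
    ∑ l ∈ range (m + 1), C l * C (m - l) = 2 * C 0 * C m + ∑ l ∈ Ico 1 m, C l * C (m - l) := by
  rw [range_eq_Ico, sum_eq_sum_Ico_succ_bot (by omega), sum_Ico_succ_top hm, Nat.sub_zero,
    Nat.sub_self]
  ring

section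

variable {A lam : ℝ} {C : ℕ → ℝ} (hlam : 0 ≤ lam)
  (hC : ∀ l : ℕ, 1 ≤ l → C l = A * (l.factorial : ℝ) ^ lam / (l : ℝ) ^ 2)
include hlam hC

lemma mul_le_of_mem_Ico {m l : ℕ} (hl : l ∈ Ico 1 m) :
    C l * C (m - l) ≤ 2 * A * C m * (1 / (l : ℝ) ^ 2 + 1 / ((m - l : ℕ) : ℝ) ^ 2) := by
  obtain ⟨hl1, hlm⟩ := mem_Ico.mp hl
  have hml : ((l : ℝ) + ((m - l : ℕ) : ℝ)) = m := by rw [← Nat.cast_add]; congr 1; omega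
  have hinv := one_div_sq_mul_sq_le (a := (l : ℝ)) (b := ((m - l : ℕ) : ℝ))
    (by exact_mod_cast hl1) (by exact_mod_cast Nat.sub_pos_of_lt hlm)
  rw [hml] at hinv
  rw [hC l hl1, hC (m - l) (by omega), hC m (by omega)]
  calc A * (l.factorial : ℝ) ^ lam / (l : ℝ) ^ 2 *
        (A * ((m - l).factorial : ℝ) ^ lam / ((m - l : ℕ) : ℝ) ^ 2)
      = A ^ 2 * ((l.factorial : ℝ) ^ lam * ((m - l).factorial : ℝ) ^ lam) *
          (1 / ((l : ℝ) ^ 2 * ((m - l : ℕ) : ℝ) ^ 2)) := by ring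
    _ ≤ A ^ 2 * (m.factorial : ℝ) ^ lam *
          (2 / (m : ℝ) ^ 2 * (1 / (l : ℝ) ^ 2 + 1 / ((m - l : ℕ) : ℝ) ^ 2)) := by
      gcongr
      exact factorial_rpow_mul_factorial_rpow_le hlm.le hlam
    _ = _ := by ring

lemma sum_Ico_mul_le {m : ℕ} (hm : 1 ≤ m) :
    ∑ l ∈ Ico 1 m, C l * C (m - l) ≤ 2 * A * C m * (π ^ 2 / 3) := by
  have hAC : 0 ≤ 2 * A * C m := by
    have h : 2 * A * C m = 2 * A ^ 2 * ((m.factorial : ℝ) ^ lam / (m : ℝ) ^ 2) := by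
      rw [hC m hm]; ring
    rw [h]; positivity
  calc ∑ l ∈ Ico 1 m, C l * C (m - l)
      ≤ ∑ l ∈ Ico 1 m, 2 * A * C m * (1 / (l : ℝ) ^ 2 + 1 / ((m - l : ℕ) : ℝ) ^ 2) :=
        sum_le_sum fun l hl => mul_le_of_mem_Ico hlam hC hl
    _ = 2 * A * C m * ∑ l ∈ Ico 1 m, (1 / (l : ℝ) ^ 2 + 1 / ((m - l : ℕ) : ℝ) ^ 2) :=
        (mul_sum _ _ _).symm
    _ ≤ 2 * A * C m * (π ^ 2 / 3) := mul_le_mul_of_nonneg_left sum_Ico_one_div_sq_add_le hAC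

end

/-- Lemma 2.2 (key lemma) of the paper, case `C₀ = A`:
with `A = 1/(2(1+π²/3))` and `C_l = A (l!)^λ / l²` for `l ≥ 1`, `C₀ = A`,
the sequence `(C_l)` satisfies `∑_{l=0}^m C_l C_{m-l} ≤ C_m`. -/
theorem stmt_5 (lam : ℝ) (hlam : 0 ≤ lam)
    (A : ℝ) (hA : A = 1 / (2 * (1 + Real.pi ^ 2 / 3)))
    (C : ℕ → ℝ)
    (hC0 : C 0 = A)
    (hC : ∀ l : ℕ, 1 ≤ l → C l = A * (l.factorial : ℝ) ^ lam / (l : ℝ) ^ 2) :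
    ∀ m : ℕ, ∑ l ∈ Finset.range (m + 1), C l * C (m - l) ≤ C m := by
  have hA_pos : 0 < A := by rw [hA]; positivity
  have hA_norm : 2 * A * (1 + π ^ 2 / 3) = 1 := by rw [hA]; field_simp
  intro m
  rcases Nat.eq_zero_or_pos m with rfl | hm
  · have hA_le_one : A ≤ 1 := by nlinarith [sq_nonneg π]
    simpa [hC0] using mul_le_of_le_one_left hA_pos.le hA_le_one
  · calc ∑ l ∈ range (m + 1), C l * C (m - l)
        = 2 * A * C m + ∑ l ∈ Ico 1 m, C l * C (m - l) := by
          rw [sum_range_succ_mul_sub_eq C hm, hC0]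
      _ ≤ 2 * A * C m + 2 * A * C m * (π ^ 2 / 3) := by
          gcongr
          exact sum_Ico_mul_le hlam hC hm
      _ = C m := by linear_combination C m * hA_norm
end

section
/- Let A = 1/(2(1+π²/3)) and C_l = A/l² for l ≥ 1, with C_0 = 0. Let ρ > 0, c ≥ 1, 0 < α < ρ/2, and set κ = ρ·√(1 − α/(ρ−α)). Let (α_{n,m})_{n,m≥0} be nonnegative reals with α_{n,m} ≤ (α/c) · C_n · ρ^{−(n+m)} for all n ≥ 1 and m ≥ 0. Suppose a nonnegative sequence (φ_k)_{k≥1} satisfies φ_1 ≤ c·α_{1,0} and, for every k ≥ 2, φ_k ≤ c·( α_{k,0} + Σ_{n≥1, m≥1, n+m≤k} α_{n,m} · (φ^{∗m})_{k−n} ), where φ^{∗m} denotes the m-fold convolution of φ with itself. Then φ_l ≤ α · C_l · κ^{−l} = α A l^{−2} κ^{−l} for every l ≥ 1. -/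
/-! Strong induction on `l`, with the majorant `ψ_j = α C_j κ^{-j}`. From `∑ 1/l² = π²/6` and
`1/(n²(k-n)²) ≤ (2/k²)(1/n² + 1/(k-n)²)` one gets `C ∗ C ≤ (2π²A/3) C ≤ C`, so the `m`-fold
convolution power of `ψ` is at most `α^m C_j κ^{-j}`. In the recursion the sum over `m` is then
geometric with ratio `α/ρ`, the sum over `n` is again `C ∗ C ≤ C`, and `ρ^{-n} ≤ κ^{-n}`, whence
`φ_l ≤ α C_l (ρ^{-l} + κ^{-l} α/(ρ-α)) ≤ α C_l κ^{-l} ((κ/ρ)² + α/(ρ-α)) = α C_l κ^{-l}`. -/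

open Finset

/-- Convolution of sequences indexed by the positive integers (realized as functions
on `ℕ`, the value at `0` being irrelevant): `(α∗β)_k = ∑_{l=1}^{k-1} α_l β_{k-l}`. -/
noncomputable def seqConv (a b : ℕ → ℝ) : ℕ → ℝ :=
  fun k => ∑ l ∈ Finset.Ico 1 k, a l * b (k - l)

/-- `convIter φ (m-1)` is the `m`-fold convolution power `φ^{∗m}`:
`φ^{∗1} = φ` and `φ^{∗(m+1)} = φ^{∗m} ∗ φ`. -/
noncomputable def convIter (a : ℕ → ℝ) : ℕ → ℕ → ℝ
  | 0 => a
  | m + 1 => seqConv (convIter a m) a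

open Real

namespace convIter

variable {φ ψ C : ℕ → ℝ}

lemma succ_apply (m j : ℕ) :
    convIter φ (m + 1) j = ∑ l ∈ Ico 1 j, convIter φ m l * φ (j - l) := rfl

lemma nonneg (hφ : ∀ k, 0 ≤ φ k) (m j : ℕ) : 0 ≤ convIter φ m j := by
  induction m generalizing j with
  | zero => exact hφ j
  | succ m ih =>
    rw [succ_apply]
    exact sum_nonneg fun l _ => mul_nonneg (ih l) (hφ _)

lemma le_of_le_on_Icc (hφ : ∀ k, 0 ≤ φ k) {J : ℕ} (h : ∀ j, 1 ≤ j → j ≤ J → φ j ≤ ψ j)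
    (m : ℕ) {j : ℕ} (hj : 1 ≤ j) (hjJ : j ≤ J) : convIter φ m j ≤ convIter ψ m j := by
  induction m generalizing j with
  | zero => exact h j hj hjJ
  | succ m ih =>
    simp only [succ_apply]
    refine sum_le_sum fun l hl => ?_
    rw [mem_Ico] at hl
    have hl' := ih (j := l) hl.1 (by omega)
    exact mul_le_mul hl' (h (j - l) (by omega) (by omega)) (hφ _)
      ((nonneg hφ m l).trans hl')

lemma mul_pow_div (C : ℕ → ℝ) (b r : ℝ) (m j : ℕ) :
    convIter (fun l => b * C l / r ^ l) m j = b ^ (m + 1) * convIter C m j / r ^ j := by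
  induction m generalizing j with
  | zero => simp [convIter]
  | succ m ih =>
    simp only [succ_apply, ih, sum_div, mul_sum]
    refine sum_congr rfl fun l hl => ?_
    rw [mem_Ico] at hl
    rw [← Nat.add_sub_cancel' hl.2.le, pow_add]
    simp only [Nat.add_sub_cancel_left]
    ring

lemma le_self (hC : ∀ k, 0 ≤ C k) (hCC : ∀ k, seqConv C C k ≤ C k) (m j : ℕ) :
    convIter C m j ≤ C j := by
  induction m generalizing j with
  | zero => exact le_rfl
  | succ m ih =>
    rw [succ_apply]
    refine le_trans (sum_le_sum fun l _ => ?_) (hCC j)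
    exact mul_le_mul_of_nonneg_right (ih l) (hC _)

end convIter

lemma one_div_sq_mul_one_div_sq_le {x y : ℝ} (hx : 0 < x) (hy : 0 < y) :
    1 / x ^ 2 * (1 / y ^ 2) ≤ 2 / (x + y) ^ 2 * (1 / x ^ 2 + 1 / y ^ 2) := by
  rw [div_add_div _ _ (by positivity) (by positivity), div_mul_div_comm, div_mul_div_comm,
    div_le_div_iff₀ (by positivity) (by positivity)]
  nlinarith [sq_nonneg (x - y), mul_pos (pow_pos hx 2) (pow_pos hy 2)]

lemma sum_Ico_one_div_sq_mul_one_div_sq_le (k : ℕ) :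
    ∑ l ∈ Ico 1 k, 1 / (l : ℝ) ^ 2 * (1 / ((k - l : ℕ) : ℝ) ^ 2) ≤ 2 * π ^ 2 / 3 / (k : ℝ) ^ 2 := by
  set S := ∑ l ∈ Ico 1 k, 1 / (l : ℝ) ^ 2
  have hreflect : ∑ l ∈ Ico 1 k, 1 / ((k - l : ℕ) : ℝ) ^ 2 = S := by
    rw [sum_Ico_reflect (fun i : ℕ => 1 / (i : ℝ) ^ 2) 1 k.le_succ, Nat.add_sub_cancel_left,
      Nat.add_sub_cancel]
  have hS : S ≤ π ^ 2 / 6 := sum_le_hasSum _ (fun i _ => by positivity) hasSum_zeta_two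
  calc ∑ l ∈ Ico 1 k, 1 / (l : ℝ) ^ 2 * (1 / ((k - l : ℕ) : ℝ) ^ 2)
      ≤ ∑ l ∈ Ico 1 k, 2 / (k : ℝ) ^ 2 * (1 / (l : ℝ) ^ 2 + 1 / ((k - l : ℕ) : ℝ) ^ 2) := by
        refine sum_le_sum fun l hl => ?_
        rw [mem_Ico] at hl
        have hk : (k : ℝ) = l + ((k - l : ℕ) : ℝ) := by rw [Nat.cast_sub hl.2.le]; ring
        rw [hk]
        exact one_div_sq_mul_one_div_sq_le (Nat.cast_pos.mpr hl.1) (by simpa using hl.2)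
    _ = 2 / (k : ℝ) ^ 2 * (2 * S) := by rw [← mul_sum, sum_add_distrib, hreflect, two_mul]
    _ ≤ 2 / (k : ℝ) ^ 2 * (2 * (π ^ 2 / 6)) := by gcongr
    _ = 2 * π ^ 2 / 3 / (k : ℝ) ^ 2 := by ring

lemma seqConv_div_sq_le {A : ℝ} (hA : 0 ≤ A) (hA' : A * (2 * π ^ 2 / 3) ≤ 1) (k : ℕ) :
    seqConv (fun l => A / (l : ℝ) ^ 2) (fun l => A / (l : ℝ) ^ 2) k ≤ A / (k : ℝ) ^ 2 :=
  calc seqConv (fun l => A / (l : ℝ) ^ 2) (fun l => A / (l : ℝ) ^ 2) k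
      = A ^ 2 * ∑ l ∈ Ico 1 k, 1 / (l : ℝ) ^ 2 * (1 / ((k - l : ℕ) : ℝ) ^ 2) := by
        rw [seqConv, mul_sum]
        exact sum_congr rfl fun l _ => by ring
    _ ≤ A ^ 2 * (2 * π ^ 2 / 3 / (k : ℝ) ^ 2) := by
        gcongr; exact sum_Ico_one_div_sq_mul_one_div_sq_le k
    _ = A * (A * (2 * π ^ 2 / 3)) / (k : ℝ) ^ 2 := by ring
    _ ≤ A / (k : ℝ) ^ 2 := by gcongr; exact mul_le_of_le_one_right hA hA'

def recursionIndices (k : ℕ) : Finset (ℕ × ℕ) :=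
  (range (k + 1) ×ˢ range (k + 1)).filter (fun p => 1 ≤ p.1 ∧ 1 ≤ p.2 ∧ p.1 + p.2 ≤ k)

lemma recursionIndices_subset (k : ℕ) : recursionIndices k ⊆ Ico 1 k ×ˢ Ico 1 (k + 1) := by
  intro p hp
  simp only [recursionIndices, mem_filter, mem_product, mem_range, mem_Ico] at hp ⊢
  omega

lemma one_div_pow_add_le {ρ κ β : ℝ} (hκ : 0 < κ) (hκρ : κ ≤ ρ) (h : (κ / ρ) ^ 2 + β ≤ 1)
    {l : ℕ} (hl : 2 ≤ l) : 1 / ρ ^ l + β / κ ^ l ≤ 1 / κ ^ l := by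
  have hρ : 0 < ρ := hκ.trans_le hκρ
  have hpow : (κ / ρ) ^ l ≤ (κ / ρ) ^ 2 :=
    pow_le_pow_of_le_one (by positivity) ((div_le_one hρ).2 hκρ) hl
  calc 1 / ρ ^ l + β / κ ^ l = ((κ / ρ) ^ l + β) / κ ^ l := by
        field_simp
        rw [div_pow]
        field_simp
    _ ≤ ((κ / ρ) ^ 2 + β) / κ ^ l := by gcongr
    _ ≤ 1 / κ ^ l := by gcongr

section Recursion

variable {C : ℕ → ℝ} {ρ c α κ : ℝ} {a : ℕ → ℕ → ℝ} {φ : ℕ → ℝ}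

lemma convIter_le_of_le (hC : ∀ k, 0 ≤ C k) (hCC : ∀ k, seqConv C C k ≤ C k) (hα : 0 ≤ α)
    (hκ : 0 ≤ κ) (hφ : ∀ k, 0 ≤ φ k) {J : ℕ} (h : ∀ j, 1 ≤ j → j ≤ J → φ j ≤ α * C j / κ ^ j)
    (m : ℕ) {j : ℕ} (hj : 1 ≤ j) (hjJ : j ≤ J) : convIter φ m j ≤ α ^ (m + 1) * C j / κ ^ j :=
  calc convIter φ m j ≤ convIter (fun j => α * C j / κ ^ j) m j :=
        convIter.le_of_le_on_Icc hφ h m hj hjJ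
    _ = α ^ (m + 1) * convIter C m j / κ ^ j := convIter.mul_pow_div C α κ m j
    _ ≤ α ^ (m + 1) * C j / κ ^ j := by gcongr; exact convIter.le_self hC hCC m j

lemma sum_recursionIndices_le (hC : ∀ k, 0 ≤ C k) (hCC : ∀ k, seqConv C C k ≤ C k)
    (hc : 0 < c) (hα : 0 ≤ α) (hαρ : α < ρ) (hκ : 0 < κ) (hκρ : κ ≤ ρ)
    (ha : ∀ n m, 1 ≤ n → a n m ≤ α / c * C n / ρ ^ (n + m)) (hφ : ∀ k, 0 ≤ φ k) {l : ℕ}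
    (IH : ∀ j, 1 ≤ j → j < l → φ j ≤ α * C j / κ ^ j) :
    ∑ p ∈ recursionIndices l, a p.1 p.2 * convIter φ (p.2 - 1) (l - p.1)
      ≤ α / c * (α / (ρ - α)) * C l / κ ^ l := by
  have hρ : 0 < ρ := hκ.trans_le hκρ
  set g : ℕ × ℕ → ℝ := fun p => C p.1 * C (l - p.1) * (α / ρ) ^ p.2 * (α / c / κ ^ l)
  have hterm : ∀ p ∈ recursionIndices l,
      a p.1 p.2 * convIter φ (p.2 - 1) (l - p.1) ≤ g p := by
    rintro ⟨n, m⟩ hp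
    simp only [recursionIndices, mem_filter, mem_product, mem_range] at hp
    obtain ⟨-, hn, hm, hnm⟩ := hp
    have hconv : convIter φ (m - 1) (l - n) ≤ α ^ m * C (l - n) / κ ^ (l - n) := by
      have := convIter_le_of_le hC hCC hα hκ.le hφ (J := l - 1)
        (fun j hj hjl => IH j hj (by omega)) (m - 1) (j := l - n) (by omega) (by omega)
      rwa [Nat.sub_add_cancel hm] at this
    have hκl : κ ^ l ≤ ρ ^ n * κ ^ (l - n) := by
      rw [← Nat.add_sub_cancel' (show n ≤ l by omega), pow_add, Nat.add_sub_cancel_left]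
      gcongr
    calc a n m * convIter φ (m - 1) (l - n)
        ≤ α / c * C n / ρ ^ (n + m) * (α ^ m * C (l - n) / κ ^ (l - n)) :=
          mul_le_mul (ha n m hn) hconv (convIter.nonneg hφ _ _) (by have := hC n; positivity)
      _ = C n * C (l - n) * (α / ρ) ^ m * (α / c) / (ρ ^ n * κ ^ (l - n)) := by
          rw [pow_add, div_pow]; field_simp
      _ ≤ C n * C (l - n) * (α / ρ) ^ m * (α / c) / κ ^ l := by
          have := hC n; have := hC (l - n)
          exact div_le_div_of_nonneg_left (by positivity) (by positivity) hκl
      _ = g (n, m) := mul_div_assoc _ _ _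
  have hg : ∀ p ∈ Ico 1 l ×ˢ Ico 1 (l + 1), 0 ≤ g p := fun p _ => by
    have := hC p.1; have := hC (l - p.1); positivity
  have hgeom : ∑ m ∈ Ico 1 (l + 1), (α / ρ) ^ m ≤ α / (ρ - α) := by
    have := geom_sum_Ico_le_of_lt_one (m := 1) (n := l + 1) (by positivity : 0 ≤ α / ρ)
      ((div_lt_one hρ).2 hαρ)
    refine this.trans_eq ?_
    rw [pow_one, one_sub_div hρ.ne', div_div_div_cancel_right₀ hρ.ne']
  calc ∑ p ∈ recursionIndices l, a p.1 p.2 * convIter φ (p.2 - 1) (l - p.1)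
      ≤ ∑ p ∈ recursionIndices l, g p := sum_le_sum hterm
    _ ≤ ∑ p ∈ Ico 1 l ×ˢ Ico 1 (l + 1), g p :=
        sum_le_sum_of_subset_of_nonneg (recursionIndices_subset l) fun p hp _ => hg p hp
    _ = seqConv C C l * (∑ m ∈ Ico 1 (l + 1), (α / ρ) ^ m) * (α / c / κ ^ l) := by
        rw [seqConv, sum_mul_sum, sum_mul, sum_product]
        simp only [sum_mul, g]
    _ ≤ C l * (α / (ρ - α)) * (α / c / κ ^ l) := by
        have := hC l
        gcongr
        exact hCC l
    _ = α / c * (α / (ρ - α)) * C l / κ ^ l := by ring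

theorem le_div_pow_of_recursion (hC : ∀ k, 0 ≤ C k) (hCC : ∀ k, seqConv C C k ≤ C k)
    (hc : 0 < c) (hα : 0 ≤ α) (hαρ : α < ρ) (hκ : 0 < κ) (hκρ : κ ≤ ρ)
    (hκα : (κ / ρ) ^ 2 + α / (ρ - α) ≤ 1)
    (ha : ∀ n m, 1 ≤ n → a n m ≤ α / c * C n / ρ ^ (n + m)) (hφ : ∀ k, 0 ≤ φ k)
    (hφ1 : φ 1 ≤ c * a 1 0)
    (hφk : ∀ k, 2 ≤ k →
      φ k ≤ c * (a k 0 + ∑ p ∈ recursionIndices k, a p.1 p.2 * convIter φ (p.2 - 1) (k - p.1)))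
    (l : ℕ) (hl : 1 ≤ l) : φ l ≤ α * C l / κ ^ l := by
  induction l using Nat.strong_induction_on with
  | _ l IH =>
  have hαC : 0 ≤ α * C l := mul_nonneg hα (hC l)
  obtain rfl | hl2 := hl.eq_or_lt
  · calc φ 1 ≤ c * (α / c * C 1 / ρ ^ (1 + 0)) := hφ1.trans (by gcongr; exact ha 1 0 le_rfl)
      _ = α * C 1 / ρ := by rw [add_zero, pow_one]; field_simp
      _ ≤ α * C 1 / κ ^ 1 := by rw [pow_one]; gcongr
  · have hsum := sum_recursionIndices_le hC hCC hc hα hαρ hκ hκρ ha hφ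
      fun j hj hjl => IH j hjl hj
    calc φ l ≤ c * (α / c * C l / ρ ^ (l + 0) + α / c * (α / (ρ - α)) * C l / κ ^ l) :=
          (hφk l hl2).trans (by gcongr; exact ha l 0 hl)
      _ = α * C l * (1 / ρ ^ l + α / (ρ - α) / κ ^ l) := by rw [add_zero]; field_simp
      _ ≤ α * C l * (1 / κ ^ l) := by gcongr; exact one_div_pow_add_le hκ hκρ hκα hl2
      _ = α * C l / κ ^ l := mul_one_div _ _

end Recursion

theorem stmt_10_general (A : ℝ) (hA : A = 1 / (2 * (1 + Real.pi ^ 2 / 3)))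
    (C : ℕ → ℝ) (hC0 : C 0 = 0) (hC : ∀ l : ℕ, 1 ≤ l → C l = A / (l : ℝ) ^ 2)
    (ρ c α κ : ℝ) (hρ : 0 < ρ) (hc : 1 ≤ c) (hα : 0 < α) (hα2 : α < ρ / 2)
    (hκ : κ = ρ * Real.sqrt (1 - α / (ρ - α)))
    (a : ℕ → ℕ → ℝ)
    (ha : ∀ n m : ℕ, 1 ≤ n → a n m ≤ α / c * C n / ρ ^ (n + m))
    (φ : ℕ → ℝ) (hφ_nonneg : ∀ k, 0 ≤ φ k)
    (hφ1 : φ 1 ≤ c * a 1 0)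
    (hφk : ∀ k : ℕ, 2 ≤ k →
      φ k ≤ c * (a k 0 +
        ∑ p ∈ (Finset.range (k + 1) ×ˢ Finset.range (k + 1)).filter
            (fun p => 1 ≤ p.1 ∧ 1 ≤ p.2 ∧ p.1 + p.2 ≤ k),
          a p.1 p.2 * convIter φ (p.2 - 1) (k - p.1))) :
    ∀ l : ℕ, 1 ≤ l → φ l ≤ α * C l / κ ^ l := by
  have hA0 : 0 < A := by rw [hA]; positivity
  -- `C 0 = 0` is also Lean's value of `A / 0 ^ 2`
  have hCdef : C = fun l : ℕ => A / (l : ℝ) ^ 2 := by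
    ext l
    rcases Nat.eq_zero_or_pos l with rfl | hl
    · simp [hC0]
    · exact hC l hl
  have hCC : ∀ k, seqConv C C k ≤ C k := by
    rw [hCdef]
    refine seqConv_div_sq_le hA0.le ?_
    rw [hA, one_div, inv_mul_le_iff₀ (by positivity)]
    linarith [Real.pi_pos]
  have hβ : 0 < 1 - α / (ρ - α) := by
    rw [sub_pos, div_lt_one (by linarith)]
    linarith
  have hβ1 : 1 - α / (ρ - α) ≤ 1 := by
    have : 0 ≤ α / (ρ - α) := div_nonneg hα.le (by linarith)
    linarith
  refine le_div_pow_of_recursion (fun k => ?_) hCC (by linarith) hα.le (by linarith) ?_ ?_ ?_ ha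
    hφ_nonneg hφ1 hφk
  · rw [hCdef]; positivity
  · rw [hκ]; exact mul_pos hρ (Real.sqrt_pos.2 hβ)
  · rw [hκ]; exact mul_le_of_le_one_right hρ.le (Real.sqrt_le_one.2 hβ1)
  · rw [hκ, mul_div_cancel_left₀ _ hρ.ne', Real.sq_sqrt hβ.le]
    linarith

/-- The inductive estimate of Proposition 2.1: if `α_{n,m} ≤ (α/c) Cₙ ρ^{-(n+m)}` and the
nonnegative sequence `(φ_k)` satisfies the recursive convolution inequalities coming from
`(2.9)–(2.10)`, then `φ_l ≤ α C_l κ^{-l} = α A l⁻² κ^{-l}` for all `l ≥ 1`, where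
`κ = ρ√(1 − α/(ρ−α))`. -/
theorem stmt_10 (A : ℝ) (hA : A = 1 / (2 * (1 + Real.pi ^ 2 / 3)))
    (C : ℕ → ℝ) (hC0 : C 0 = 0) (hC : ∀ l : ℕ, 1 ≤ l → C l = A / (l : ℝ) ^ 2)
    (ρ c α κ : ℝ) (hρ : 0 < ρ) (hc : 1 ≤ c) (hα : 0 < α) (hα2 : α < ρ / 2)
    (hκ : κ = ρ * Real.sqrt (1 - α / (ρ - α)))
    (a : ℕ → ℕ → ℝ) (ha_nonneg : ∀ n m, 0 ≤ a n m)
    (ha : ∀ n m : ℕ, 1 ≤ n → a n m ≤ α / c * C n / ρ ^ (n + m))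
    (φ : ℕ → ℝ) (hφ_nonneg : ∀ k, 0 ≤ φ k)
    (hφ1 : φ 1 ≤ c * a 1 0)
    (hφk : ∀ k : ℕ, 2 ≤ k →
      φ k ≤ c * (a k 0 +
        ∑ p ∈ (Finset.range (k + 1) ×ˢ Finset.range (k + 1)).filter
            (fun p => 1 ≤ p.1 ∧ 1 ≤ p.2 ∧ p.1 + p.2 ≤ k),
          a p.1 p.2 * convIter φ (p.2 - 1) (k - p.1))) :
    ∀ l : ℕ, 1 ≤ l → φ l ≤ α * C l / κ ^ l :=
  stmt_10_general A hA C hC0 hC ρ c α κ hρ hc hα hα2 hκ a ha φ hφ_nonneg hφ1 hφk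
end

section
/- Let ρ₁ > 0, ρ > 0 and let G : ℂ × ℂ^ν → ℂ^ν be holomorphic on a neighborhood of D̄_{ρ₁} × D̄_ρ^ν with G(0,0) = 0, and assume the matrix B := ∂G/∂f(0,0) is invertible. Then there exist κ > 0 and α > 0 such that there is a unique holomorphic function f* : D_κ → ℂ^ν with f*(0) = 0 and G(z, f*(z)) = 0 for all z ∈ D_κ, and its Taylor coefficients at 0, f*(z) = Σ_{k≥1} a_{0,k} z^k, satisfy ‖a_{0,k}‖ ≤ α · A · k^{−2} · κ^{−k} for all k ≥ 1, where A = 1/(2(1+π²/3)). -/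
open Metric Filter Topology

/-!
Holomorphic maps of several complex variables are `C¹`: the Cauchy estimate on complex lines
bounds the variation of the derivative by the variation of the map. Hence the `C¹` implicit
function theorem applies to `G(z, w) = 0` at the origin and yields a solution `f*` that is
complex differentiable near `0`. Any other holomorphic solution with `g 0 = 0` agrees with `f*`
near `0` by local uniqueness, hence on the whole disc by the identity theorem. Finally, Cauchy's
estimate on a circle of radius `r > κ` gives `‖a_{0,k}‖ ≤ M r⁻ᵏ`, and `k² (κ / r)ᵏ` is bounded,
which absorbs both `k⁻²` and the constant `A` into `α`.
-/

section HolomorphicIsC1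

variable {E F : Type*} [NormedAddCommGroup E] [NormedSpace ℂ E]
  [NormedAddCommGroup F] [NormedSpace ℂ F] {f : E → F}

theorem Complex.norm_fderiv_le_of_forall_norm_le {c : E} {r M : ℝ} (hr : 0 < r)
    (hf : DifferentiableOn ℂ f (ball c r)) (hM : ∀ y ∈ ball c r, ‖f y‖ ≤ M) :
    ‖fderiv ℂ f c‖ ≤ 2 * M / r := by
  refine Complex.norm_fderiv_le_div_of_mapsTo_ball hf (fun y hy => ?_) hr
  rw [mem_closedBall, dist_eq_norm]
  linarith [norm_sub_le (f y) (f c), hM y hy, hM c (mem_ball_self hr)]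

/-- By the Cauchy estimate, `fderiv f q - fderiv f p` is controlled by the sup of
`f (· + (q - p)) - f` on a ball around `p`, which is small by uniform continuity of `f` on a
compact neighbourhood of `p`. -/
theorem DifferentiableOn.continuousOn_fderiv_of_isOpen [ProperSpace E] {U : Set E}
    (hU : IsOpen U) (hf : DifferentiableOn ℂ f U) : ContinuousOn (fderiv ℂ f) U := by
  intro p hp
  refine ContinuousAt.continuousWithinAt (Metric.continuousAt_iff.2 fun ε hε => ?_)
  obtain ⟨R, hR, hRU⟩ := nhds_basis_closedBall.mem_iff.1 (hU.mem_nhds hp)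
  have hfd : ∀ y ∈ closedBall p R, DifferentiableAt ℂ f y := fun y hy =>
    hf.differentiableAt (hU.mem_nhds (hRU hy))
  obtain ⟨δ, hδ, hunif⟩ := Metric.uniformContinuousOn_iff.1
    ((isCompact_closedBall p R).uniformContinuousOn_of_continuous
      (hf.continuousOn.mono hRU)) (ε * R / 8) (by positivity)
  refine ⟨min δ (R / 2), lt_min hδ (half_pos hR), fun {q} hq => ?_⟩
  set d := q - p
  have hd : ‖d‖ < min δ (R / 2) := by rwa [← dist_eq_norm]
  have hball : ∀ y ∈ ball p (R / 2), y ∈ closedBall p R ∧ y + d ∈ closedBall p R := by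
    intro y hy
    rw [mem_ball, dist_eq_norm] at hy
    refine ⟨mem_closedBall_iff_norm.2 (by linarith), mem_closedBall_iff_norm.2 ?_⟩
    calc ‖y + d - p‖ ≤ ‖y - p‖ + ‖d‖ := by rw [add_sub_right_comm]; exact norm_add_le _ _
      _ ≤ R := by linarith [hd.trans_le (min_le_right _ _)]
  have htrans : ∀ y ∈ ball p (R / 2), DifferentiableAt ℂ (fun x => f (x + d)) y :=
    fun y hy => (hfd _ (hball y hy).2).comp y (differentiableAt_id.add_const d)
  have hdiff : ∀ y ∈ ball p (R / 2), DifferentiableAt ℂ (fun x => f (x + d) - f x) y :=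
    fun y hy => (htrans y hy).sub (hfd y (hball y hy).1)
  have hsmall : ∀ y ∈ ball p (R / 2), ‖f (y + d) - f y‖ ≤ ε * R / 8 := fun y hy => by
    rw [← dist_eq_norm]
    exact (hunif _ (hball y hy).2 _ (hball y hy).1
      (by rw [dist_eq_norm, add_sub_cancel_left]; exact hd.trans_le (min_le_left _ _))).le
  have hderiv : fderiv ℂ (fun x => f (x + d) - f x) p = fderiv ℂ f q - fderiv ℂ f p := by
    rw [fderiv_fun_sub (htrans p (mem_ball_self (half_pos hR)))
      (hfd p (mem_closedBall_self hR.le)), fderiv_comp_add_right, add_sub_cancel]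
  rw [dist_eq_norm, ← hderiv]
  calc _ ≤ 2 * (ε * R / 8) / (R / 2) :=
        Complex.norm_fderiv_le_of_forall_norm_le (half_pos hR)
          (fun y hy => (hdiff y hy).differentiableWithinAt) hsmall
    _ < ε := by field_simp; linarith

theorem DifferentiableOn.contDiffOn_one_of_isOpen [ProperSpace E] {U : Set E}
    (hU : IsOpen U) (hf : DifferentiableOn ℂ f U) : ContDiffOn ℂ 1 f U := by
  rw [← zero_add 1, contDiffOn_succ_iff_fderiv_of_isOpen hU, contDiffOn_zero]
  exact ⟨hf, by simp, hf.continuousOn_fderiv_of_isOpen hU⟩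

end HolomorphicIsC1

section ImplicitFunction

variable {𝕜 : Type*} [RCLike 𝕜]
  {E₁ E₂ F : Type*} [NormedAddCommGroup E₁] [NormedSpace 𝕜 E₁] [CompleteSpace E₁]
  [NormedAddCommGroup E₂] [NormedSpace 𝕜 E₂] [CompleteSpace E₂]
  [NormedAddCommGroup F] [NormedSpace 𝕜 F] [CompleteSpace F]

theorem ContDiffAt.exists_differentiable_implicitFunction {G : E₁ × E₂ → F} {u : E₁ × E₂}
    (hG : ContDiffAt 𝕜 1 G u) (hB : (fderiv 𝕜 G u ∘L .inr 𝕜 E₁ E₂).IsInvertible) :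
    ∃ ψ : E₁ → E₂, ψ u.1 = u.2 ∧
      (∀ᶠ x in 𝓝 u.1, DifferentiableAt 𝕜 ψ x ∧ G (x, ψ x) = G u) ∧
      ∀ᶠ v in 𝓝 u, G v = G u → ψ v.1 = v.2 := by
  refine ⟨hG.implicitFunction one_ne_zero hB, hG.implicitFunction_apply_self one_ne_zero hB,
    ?_, ?_⟩
  · filter_upwards [(hG.contDiffAt_implicitFunction one_ne_zero hB).eventually (by simp),
      hG.eventually_apply_implicitFunction one_ne_zero hB] with x hx hGx
    exact ⟨hx.differentiableAt one_ne_zero, hGx⟩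
  · filter_upwards [hG.eventually_apply_eq_iff_implicitFunction one_ne_zero hB] with v hv
    exact hv.1

end ImplicitFunction

section HolomorphicOnDisc

variable {E : Type*} [NormedAddCommGroup E] [NormedSpace ℂ E] [CompleteSpace E]

theorem eqOn_ball_of_eventually_implicit {F : Type*} {G : ℂ × E → F} {c : F} {ψ g : ℂ → E}
    {κ : ℝ} (hκ : 0 < κ) (hψ : DifferentiableOn ℂ ψ (ball 0 κ))
    (hg : DifferentiableOn ℂ g (ball 0 κ)) (hg0 : g 0 = ψ 0)
    (hψuniq : ∀ᶠ v in 𝓝 ((0 : ℂ), ψ 0), G v = c → ψ v.1 = v.2)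
    (hgG : ∀ z ∈ ball 0 κ, G (z, g z) = c) : Set.EqOn g ψ (ball 0 κ) := by
  have hlim : Tendsto (fun z => (z, g z)) (𝓝 0) (𝓝 ((0 : ℂ), ψ 0)) := by
    rw [← hg0]
    exact (continuousAt_id.prodMk
      (hg.continuousOn.continuousAt (ball_mem_nhds 0 hκ))).tendsto
  have hnear : g =ᶠ[𝓝 0] ψ := by
    filter_upwards [hlim.eventually hψuniq, ball_mem_nhds 0 hκ] with z hz hzκ
    exact (hz (hgG z hzκ)).symm
  exact (hg.analyticOnNhd isOpen_ball).eqOn_of_preconnected_of_eventuallyEq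
    (hψ.analyticOnNhd isOpen_ball) (convex_ball 0 κ).isPreconnected (mem_ball_self hκ) hnear

theorem exists_norm_iteratedDeriv_div_factorial_le {f : ℂ → E} {c : ℂ}
    {R κ A : ℝ} (hf : DifferentiableOn ℂ f (ball c R)) (hκ : 0 < κ) (hκR : κ < R) (hA : 0 < A) :
    ∃ α > 0, ∀ k : ℕ, 1 ≤ k →
      ‖((k.factorial : ℂ))⁻¹ • iteratedDeriv k f c‖ ≤ α * A / (k : ℝ) ^ 2 / κ ^ k := by
  obtain ⟨r, hκr, hrR⟩ := exists_between hκR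
  have hr : 0 < r := hκ.trans hκr
  have hfr : DiffContOnCl ℂ f (ball c r) := (hf.mono (by
    rw [closure_ball c hr.ne']; exact closedBall_subset_ball hrR)).diffContOnCl
  obtain ⟨M, hM⟩ := (isCompact_sphere c r).exists_bound_of_continuousOn
    (hfr.continuousOn.mono (by rw [closure_ball c hr.ne']; exact sphere_subset_closedBall))
  obtain ⟨B, hB⟩ := (tendsto_pow_const_mul_const_pow_of_abs_lt_one 2 (r := κ / r)
    (by rwa [abs_of_pos (by positivity), div_lt_one hr])).bddAbove_range
  refine ⟨(max M 0 * max B 0 + 1) / A, by positivity, fun k hk => ?_⟩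
  have hcauchy : ‖((k.factorial : ℂ))⁻¹ • iteratedDeriv k f c‖ ≤ max M 0 / r ^ k := by
    have hfact : (0 : ℝ) < k.factorial := by exact_mod_cast k.factorial_pos
    rw [norm_smul, norm_inv, Complex.norm_natCast, inv_mul_le_iff₀ hfact, ← mul_div_assoc]
    exact Complex.norm_iteratedDeriv_le_of_forall_mem_sphere_norm_le k hr hfr
      fun z hz => (hM z hz).trans (le_max_left _ _)
  rw [div_mul_cancel₀ _ hA.ne', div_div, le_div_iff₀ (by positivity)]
  calc _ ≤ max M 0 / r ^ k * ((k : ℝ) ^ 2 * κ ^ k) := by gcongr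
    _ = max M 0 * ((k : ℝ) ^ 2 * (κ / r) ^ k) := by rw [div_pow]; field_simp
    _ ≤ max M 0 * max B 0 := by gcongr; exact (hB ⟨k, rfl⟩).trans (le_max_left _ _)
    _ ≤ _ := by linarith

end HolomorphicOnDisc

/-- Section 3 of the paper: existence, uniqueness and coefficient bounds for the
solution `f*` of the implicit equation `G(z, f*(z)) = 0` with `f*(0) = 0`, where `G` is
holomorphic on a neighborhood of `D̄_{ρ₁} × D̄_ρ^ν`, `G(0,0) = 0` and `∂G/∂f(0,0)` is
invertible.  The Taylor coefficients `a_{0,k}` of `f*` at `0` satisfy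
`‖a_{0,k}‖ ≤ α A k⁻² κ^{-k}` with `A = 1/(2(1+π²/3))`. -/
theorem stmt_12 (ν : ℕ) (ρ₁ ρ : ℝ) (hρ₁ : 0 < ρ₁) (hρ : 0 < ρ)
    (G : ℂ × EuclideanSpace ℂ (Fin ν) → EuclideanSpace ℂ (Fin ν))
    (hG : ∃ U : Set (ℂ × EuclideanSpace ℂ (Fin ν)), IsOpen U ∧
      (Metric.closedBall (0 : ℂ) ρ₁ ×ˢ
        {w : EuclideanSpace ℂ (Fin ν) | ∀ i, ‖w i‖ ≤ ρ}) ⊆ U ∧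
      DifferentiableOn ℂ G U)
    (hG0 : G (0, 0) = 0)
    (hB : IsUnit (fderiv ℂ (fun w => G (0, w)) 0)) :
    ∃ κ > 0, ∃ α > 0, ∃ fstar : ℂ → EuclideanSpace ℂ (Fin ν),
      (DifferentiableOn ℂ fstar (Metric.ball 0 κ) ∧ fstar 0 = 0 ∧
        ∀ z ∈ Metric.ball (0 : ℂ) κ, G (z, fstar z) = 0) ∧
      (∀ g : ℂ → EuclideanSpace ℂ (Fin ν),
        DifferentiableOn ℂ g (Metric.ball 0 κ) → g 0 = 0 →
        (∀ z ∈ Metric.ball (0 : ℂ) κ, G (z, g z) = 0) →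
        Set.EqOn g fstar (Metric.ball 0 κ)) ∧
      ∀ k : ℕ, 1 ≤ k →
        ‖((k.factorial : ℂ))⁻¹ • iteratedDeriv k fstar 0‖ ≤
          α * (1 / (2 * (1 + Real.pi ^ 2 / 3))) / (k : ℝ) ^ 2 / κ ^ k := by
  obtain ⟨U, hUo, hUsub, hGU⟩ := hG
  have h0U : ((0 : ℂ), (0 : EuclideanSpace ℂ (Fin ν))) ∈ U :=
    hUsub ⟨mem_closedBall_self hρ₁.le, fun i => by simp [hρ.le]⟩
  have hGd : HasFDerivAt G (fderiv ℂ G (0, 0)) (0, 0) :=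
    (hGU.differentiableAt (hUo.mem_nhds h0U)).hasFDerivAt
  have hpartial : (fderiv ℂ G (0, 0) ∘L .inr ℂ ℂ _).IsInvertible := by
    obtain ⟨u, hu⟩ := hB
    exact ⟨.ofUnit u, hu.trans (hGd.comp 0 (hasFDerivAt_prodMk_right 0 0)).fderiv⟩
  have hC1 : ContDiffAt ℂ 1 G (0, 0) :=
    (hGU.contDiffOn_one_of_isOpen hUo).contDiffAt (hUo.mem_nhds h0U)
  obtain ⟨ψ, hψ0, hψ, hψuniq⟩ := hC1.exists_differentiable_implicitFunction hpartial
  obtain ⟨κ₀, hκ₀, hψκ₀⟩ := Metric.eventually_nhds_iff_ball.1 hψ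
  simp only [hG0] at hψ0 hψκ₀ hψuniq
  have hψd : DifferentiableOn ℂ ψ (ball 0 κ₀) := fun z hz =>
    (hψκ₀ z hz).1.differentiableWithinAt
  obtain ⟨α, hα, hcoeff⟩ := exists_norm_iteratedDeriv_div_factorial_le hψd (half_pos hκ₀)
    (half_lt_self hκ₀) (by positivity : (0 : ℝ) < 1 / (2 * (1 + Real.pi ^ 2 / 3)))
  have hsub : ball (0 : ℂ) (κ₀ / 2) ⊆ ball 0 κ₀ := ball_subset_ball (half_le_self hκ₀.le)
  refine ⟨κ₀ / 2, half_pos hκ₀, α, hα, ψ,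
    ⟨hψd.mono hsub, hψ0, fun z hz => (hψκ₀ z (hsub hz)).2⟩, fun g hg hg0 hgG => ?_, hcoeff⟩
  exact eqOn_ball_of_eventually_implicit (half_pos hκ₀) (hψd.mono hsub) hg
    (hg0.trans hψ0.symm) (by rwa [hψ0]) hgG
end

section
/- Let κ > 0 and for a holomorphic function h on D_κ = {z ∈ ℂ : |z| < κ} define the Nagumo norm ‖h‖_j = sup_{|z|<κ} (κ − |z|)^j |h(z)| for integers j ≥ 0. Then for every holomorphic f : D_κ → ℂ and every integer k ≥ 0, the derivative satisfies ‖f′‖_{k+1} ≤ e·(k+1)·‖f‖_k, where e is Euler's number. -/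
/-!
Fix `z` with `d = κ - |z|` and apply Cauchy's estimate on the circle of radius `r = d/(k+2)`
around `z`. On that circle `κ - |w| ≥ d - r = d(k+1)/(k+2)`, so `|f| ≤ ‖f‖_k (d - r)^{-k}`
there and `d^{k+1} |f'(z)| ≤ ‖f‖_k d^{k+1} / ((d - r)^k r) = ‖f‖_k (k+1) (1 + 1/(k+1))^{k+1}`,
which is at most `e (k+1) ‖f‖_k`.
-/

open Metric

/-- The Nagumo norm of order `j` on the disc `D_κ`:
`‖h‖_j = sup_{|z|<κ} (κ − |z|)^j |h(z)|` (with value in `[0,∞]`). -/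
noncomputable def nagumoNorm (κ : ℝ) (j : ℕ) (h : ℂ → ℂ) : ENNReal :=
  ⨆ z ∈ Metric.ball (0 : ℂ) κ, ENNReal.ofReal ((κ - ‖z‖) ^ j * ‖h z‖)

lemma nagumoNorm_le_ofReal_iff {κ M : ℝ} {j : ℕ} {h : ℂ → ℂ} (hM : 0 ≤ M) :
    nagumoNorm κ j h ≤ ENNReal.ofReal M ↔ ∀ w ∈ ball (0 : ℂ) κ, (κ - ‖w‖) ^ j * ‖h w‖ ≤ M := by
  simp only [nagumoNorm, iSup₂_le_iff, ENNReal.ofReal_le_ofReal_iff hM]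

lemma add_two_pow_div_add_one_pow_le (k : ℕ) :
    ((k : ℝ) + 2) ^ (k + 1) / ((k : ℝ) + 1) ^ k ≤ Real.exp 1 * (k + 1) := by
  have hbase : 1 + ((k + 1 : ℕ) : ℝ)⁻¹ = (k + 2) / (k + 1) := by
    push_cast
    field_simp
    ring
  have hratio : ((k : ℝ) + 2) ^ (k + 1) / ((k : ℝ) + 1) ^ k =
      (1 + ((k + 1 : ℕ) : ℝ)⁻¹) ^ (k + 1) * (k + 1) := by
    rw [hbase, div_pow]
    field_simp
    ring
  rw [hratio]
  exact mul_le_mul_of_nonneg_right Real.one_add_inv_pow_le_exp (by positivity)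

lemma weighted_norm_deriv_le {κ M : ℝ} {k : ℕ} {f : ℂ → ℂ}
    (hf : DifferentiableOn ℂ f (ball 0 κ))
    (hbound : ∀ w ∈ ball (0 : ℂ) κ, (κ - ‖w‖) ^ k * ‖f w‖ ≤ M) {z : ℂ} (hz : z ∈ ball 0 κ) :
    (κ - ‖z‖) ^ (k + 1) * ‖deriv f z‖ ≤ Real.exp 1 * (k + 1) * M := by
  have hzκ : ‖z‖ < κ := mem_ball_zero_iff.mp hz
  set d := κ - ‖z‖ with hd_def
  have hd : 0 < d := sub_pos.mpr hzκ
  have hM : 0 ≤ M := (by positivity : 0 ≤ d ^ k * ‖f z‖).trans (hbound z hz)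
  set r := d / (k + 2) with hr_def
  have hr : 0 < r := by positivity
  have hdr : d - r = d * (k + 1) / (k + 2) := by rw [hr_def]; field_simp; ring
  have hdr_pos : 0 < d - r := by rw [hdr]; positivity
  have hnorm_le : ∀ w ∈ closedBall z r, ‖w‖ ≤ ‖z‖ + r := fun w hw => norm_le_of_mem_closedBall hw
  have hsub : closedBall z r ⊆ ball 0 κ := fun w hw => by
    rw [mem_ball_zero_iff]; linarith [hnorm_le w hw]
  have hsphere : ∀ w ∈ sphere z r, ‖f w‖ ≤ M / (d - r) ^ k := by
    intro w hw
    have hw' : w ∈ closedBall z r := sphere_subset_closedBall hw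
    have hweight : d - r ≤ κ - ‖w‖ := by linarith [hnorm_le w hw']
    rw [le_div_iff₀ (by positivity), mul_comm]
    exact (mul_le_mul_of_nonneg_right (pow_le_pow_left₀ hdr_pos.le hweight k)
      (norm_nonneg _)).trans (hbound w (hsub hw'))
  have hcauchy : ‖deriv f z‖ ≤ M / (d - r) ^ k / r :=
    Complex.norm_deriv_le_of_forall_mem_sphere_norm_le hr (hf.diffContOnCl_ball hsub) hsphere
  have hcombine : d ^ (k + 1) * (M / (d - r) ^ k / r) =
      ((k : ℝ) + 2) ^ (k + 1) / ((k : ℝ) + 1) ^ k * M := by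
    rw [hdr, hr_def, div_pow, mul_pow]
    field_simp
    ring
  calc d ^ (k + 1) * ‖deriv f z‖ ≤ d ^ (k + 1) * (M / (d - r) ^ k / r) := by gcongr
    _ = ((k : ℝ) + 2) ^ (k + 1) / ((k : ℝ) + 1) ^ k * M := hcombine
    _ ≤ Real.exp 1 * (k + 1) * M :=
      mul_le_mul_of_nonneg_right (add_two_pow_div_add_one_pow_le k) hM

theorem stmt_14_general (κ : ℝ) (f : ℂ → ℂ)
    (hf : DifferentiableOn ℂ f (Metric.ball 0 κ)) (k : ℕ) :
    nagumoNorm κ (k + 1) (deriv f) ≤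
      ENNReal.ofReal (Real.exp 1 * (k + 1)) * nagumoNorm κ k f := by
  have he : 0 ≤ Real.exp 1 * (k + 1) := by positivity
  rcases eq_top_or_lt_top (nagumoNorm κ k f) with htop | hfin
  · rw [htop, ENNReal.mul_top (by simp only [ne_eq, ENNReal.ofReal_eq_zero, not_le]; positivity)]
    exact le_top
  set M := (nagumoNorm κ k f).toReal
  have hM : 0 ≤ M := ENNReal.toReal_nonneg
  have hbound : ∀ w ∈ ball (0 : ℂ) κ, (κ - ‖w‖) ^ k * ‖f w‖ ≤ M :=
    (nagumoNorm_le_ofReal_iff hM).mp (ENNReal.ofReal_toReal hfin.ne).ge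
  rw [← ENNReal.ofReal_toReal hfin.ne, ← ENNReal.ofReal_mul he,
    nagumoNorm_le_ofReal_iff (mul_nonneg he hM)]
  exact fun z hz => weighted_norm_deriv_le hf hbound hz

/-- Derivative property of Nagumo norms: `‖f′‖_{k+1} ≤ e (k+1) ‖f‖_k` for a holomorphic
function `f` on the disc `D_κ`, where `e` is Euler's number. -/
theorem stmt_14 (κ : ℝ) (hκ : 0 < κ) (f : ℂ → ℂ)
    (hf : DifferentiableOn ℂ f (Metric.ball 0 κ)) (k : ℕ) :
    nagumoNorm κ (k + 1) (deriv f) ≤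
      ENNReal.ofReal (Real.exp 1 * (k + 1)) * nagumoNorm κ k f :=
  stmt_14_general κ f hf k
end

section
/- Let γ ∈ (0, 2π), E > 0 and let S = S(0,γ;E) be the open sector {ε ∈ ℂ : 0 < |ε| < E, |arg ε| < γ/2}. Let g : S → ℂ^ν be holomorphic and suppose there exist constants C, μ > 0 such that ‖g^{(i)}(ε)‖ ≤ C · (i!)² · μ^i for every integer i ≥ 0 and every ε ∈ S. Then for each i ≥ 0 the limit g_i := lim_{S ∋ ε → 0} g^{(i)}(ε)/i! exists in ℂ^ν, and for every integer I ≥ 0 and every ε ∈ S, ‖g(ε) − Σ_{i=0}^{I−1} g_i ε^i‖ ≤ C · I! · μ^I · |ε|^I. -/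
/-!
A bound on `g⁽ⁱ⁺¹⁾` makes `g⁽ⁱ⁾` vary by at most `O(|ε₁| + |ε₂|)` between two points of the
sector: join each `εⱼ` to `|εⱼ|` by a circular arc, and `|ε₁|` to `|ε₂|` by a real segment. Hence
`g⁽ⁱ⁾` is Cauchy at `0` and has a limit `Lᵢ`. The remainder estimate goes by induction on `I`,
applied to `g'`: the derivative of the `(I+1)`-st remainder is the `I`-th remainder of `g'`, so
it is `O(|ε|ᴵ)`; since the remainder tends to `0` at `0`, integrating along the ray `(0, ε]`
gives `O(|ε|ᴵ⁺¹ / (I+1))`.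
-/

open Metric Filter

/-- The open sector `S(0,γ;E) = {ε ∈ ℂ : 0 < |ε| < E, |arg ε| < γ/2}`. -/
def sector (γ E : ℝ) : Set ℂ :=
  {ε : ℂ | 0 < ‖ε‖ ∧ ‖ε‖ < E ∧ |Complex.arg ε| < γ / 2}

open Set Complex Topology
open scoped Nat Real

theorem isOpen_sector (γ E : ℝ) : IsOpen (sector γ E) := by
  refine isOpen_iff_mem_nhds.2 fun z ⟨hz0, hzE, hz⟩ => ?_
  have harg : ∀ᶠ w in 𝓝 z, |arg w| < γ / 2 := by
    by_cases hslit : z ∈ slitPlane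
    · exact (continuousAt_arg hslit).abs.eventually (gt_mem_nhds hz)
    · -- off the slit plane `arg z = π`, so the angular condition holds everywhere
      have hπ : arg z = π := by
        by_contra h
        exact hslit (mem_slitPlane_iff_arg.2 ⟨h, norm_pos_iff.1 hz0⟩)
      rw [hπ, abs_of_pos Real.pi_pos] at hz
      exact Eventually.of_forall fun w => (abs_arg_le_pi w).trans_lt hz
  filter_upwards [continuous_norm.continuousAt.eventually (lt_mem_nhds hz0),
    continuous_norm.continuousAt.eventually (gt_mem_nhds hzE), harg] with w h0 hE harg
  exact ⟨h0, hE, harg⟩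

theorem ofReal_mem_sector {γ E x : ℝ} (hγ : 0 < γ) (hx : 0 < x) (hxE : x < E) :
    (x : ℂ) ∈ sector γ E := by
  refine ⟨by simpa [abs_of_pos hx], by simpa [abs_of_pos hx], ?_⟩
  rw [arg_ofReal_of_nonneg hx.le, abs_zero]
  exact half_pos hγ

theorem ofReal_mul_mem_sector {γ E t : ℝ} {z : ℂ} (hz : z ∈ sector γ E) (ht : t ∈ Ioc 0 1) :
    (t : ℂ) * z ∈ sector γ E := by
  have hnorm : ‖(t : ℂ) * z‖ = t * ‖z‖ := by
    rw [norm_mul, norm_real, Real.norm_of_nonneg ht.1.le]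
  refine ⟨?_, ?_, ?_⟩
  · rw [hnorm]; exact mul_pos ht.1 hz.1
  · rw [hnorm]; nlinarith [hz.1, hz.2.1, ht.1, ht.2]
  · rw [arg_real_mul z ht.1]; exact hz.2.2

theorem arc_mem_sector {γ E t : ℝ} {z : ℂ} (hz : z ∈ sector γ E) (ht : t ∈ Icc 0 1) :
    (‖z‖ : ℂ) * exp (↑(t * arg z) * I) ∈ sector γ E := by
  have hnorm : ‖(‖z‖ : ℂ) * exp (↑(t * arg z) * I)‖ = ‖z‖ := by
    rw [norm_mul, norm_exp_ofReal_mul_I, mul_one, norm_real, norm_norm]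
  have harg : |t * arg z| ≤ |arg z| := by
    rw [abs_mul, abs_of_nonneg ht.1]
    exact mul_le_of_le_one_left (abs_nonneg _) ht.2
  have hmem : t * arg z ∈ Ioc (-π) (-π + 2 * π) := by
    constructor <;> nlinarith [neg_pi_lt_arg z, arg_le_pi z, ht.1, ht.2, Real.pi_pos]
  refine ⟨hnorm.symm ▸ hz.1, hnorm.symm ▸ hz.2.1, ?_⟩
  rw [arg_real_mul _ hz.1, arg_exp_mul_I, (toIocMod_eq_self _).2 hmem]
  exact harg.trans_lt hz.2.2

theorem exists_tendsto_nhdsWithin_of_dist_le {α β : Type*} [PseudoMetricSpace α]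
    [PseudoMetricSpace β] [CompleteSpace β] [Nonempty β] {f : α → β} {S : Set α} {a : α}
    {K : ℝ} (hf : ∀ x ∈ S, ∀ y ∈ S, dist (f x) (f y) ≤ K * (dist x a + dist y a)) :
    ∃ L, Tendsto f (𝓝[S] a) (𝓝 L) := by
  rcases (𝓝[S] a).eq_or_neBot with hbot | hne
  · exact ⟨Classical.arbitrary β, hbot ▸ tendsto_bot⟩
  refine cauchy_map_iff_exists_tendsto.1 (Metric.cauchy_iff.2 ⟨map_neBot, fun δ hδ => ?_⟩)
  set ρ := δ / (2 * |K| + 1)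
  have hρ : 0 < ρ := by positivity
  refine ⟨f '' (S ∩ ball a ρ), image_mem_map (inter_mem_nhdsWithin S (ball_mem_nhds a hρ)), ?_⟩
  rintro _ ⟨x, ⟨hxS, hx⟩, rfl⟩ _ ⟨y, ⟨hyS, hy⟩, rfl⟩
  rw [mem_ball] at hx hy
  calc dist (f x) (f y) ≤ |K| * (dist x a + dist y a) :=
        (hf x hxS y hyS).trans (mul_le_mul_of_nonneg_right (le_abs_self K) (by positivity))
    _ ≤ |K| * (2 * ρ) := by gcongr; linarith
    _ < δ := by
        rw [show |K| * (2 * ρ) = δ * (2 * |K|) / (2 * |K| + 1) by ring, div_lt_iff₀ (by positivity)]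
        nlinarith

section

variable {F : Type*} [NormedAddCommGroup F] [NormedSpace ℂ F] {S : Set ℂ}

theorem norm_sub_le_of_hasDerivAt_path {f f' : ℂ → F} {K ℓ : ℝ} {p p' : ℝ → ℂ}
    (hf : ∀ z ∈ S, HasDerivAt f (f' z) z) (hK : ∀ z ∈ S, ‖f' z‖ ≤ K)
    (hp : ∀ t ∈ Icc (0 : ℝ) 1, HasDerivAt p (p' t) t) (hℓ : ∀ t ∈ Icc (0 : ℝ) 1, ‖p' t‖ ≤ ℓ)
    (hpS : ∀ t ∈ Icc (0 : ℝ) 1, p t ∈ S) :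
    ‖f (p 1) - f (p 0)‖ ≤ K * ℓ := by
  have hcomp : ∀ t ∈ Icc (0 : ℝ) 1,
      HasDerivWithinAt (f ∘ p) (p' t • f' (p t)) (Icc 0 1) t := fun t ht =>
    ((hf _ (hpS t ht)).scomp t (hp t ht)).hasDerivWithinAt
  have hbound : ∀ t ∈ Ico (0 : ℝ) 1, ‖p' t • f' (p t)‖ ≤ ℓ * K := fun t ht => by
    have ht' := Ico_subset_Icc_self ht
    rw [norm_smul]
    exact mul_le_mul (hℓ t ht') (hK _ (hpS t ht')) (norm_nonneg _)
      ((norm_nonneg _).trans (hℓ t ht'))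
  simpa [mul_comm] using
    norm_image_sub_le_of_norm_deriv_le_segment' hcomp hbound 1 (right_mem_Icc.2 zero_le_one)

theorem norm_sub_norm_le_of_hasDerivAt_on_sector {f f' : ℂ → F} {γ E K : ℝ}
    (hf : ∀ z ∈ sector γ E, HasDerivAt f (f' z) z) (hK : ∀ z ∈ sector γ E, ‖f' z‖ ≤ K)
    {z : ℂ} (hz : z ∈ sector γ E) :
    ‖f z - f ‖z‖‖ ≤ K * (π * ‖z‖) := by
  have harc : ∀ t : ℝ, HasDerivAt (fun t : ℝ => (‖z‖ : ℂ) * exp (↑(t * arg z) * I))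
      ((‖z‖ : ℂ) * (exp (↑(t * arg z) * I) * (arg z * I))) t := fun t => by
    have := (((hasDerivAt_id t).mul_const (arg z)).ofReal_comp.mul_const I).cexp.const_mul
      (‖z‖ : ℂ)
    simpa using this
  have h := norm_sub_le_of_hasDerivAt_path hf hK (fun t _ => harc t) (ℓ := π * ‖z‖)
    (fun t _ => ?_) (fun t ht => arc_mem_sector hz ht)
  · simpa [norm_mul_exp_arg_mul_I] using h
  · rw [norm_mul, norm_mul, norm_exp_ofReal_mul_I, norm_mul, norm_real, norm_I, norm_real,
      norm_norm, Real.norm_eq_abs]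
    nlinarith [abs_arg_le_pi z, norm_nonneg z]

theorem norm_sub_le_of_hasDerivAt_on_sector {f f' : ℂ → F} {γ E K : ℝ}
    (hf : ∀ z ∈ sector γ E, HasDerivAt f (f' z) z) (hK : ∀ z ∈ sector γ E, ‖f' z‖ ≤ K)
    {z w : ℂ} (hz : z ∈ sector γ E) (hw : w ∈ sector γ E) :
    ‖f z - f w‖ ≤ (π + 1) * K * (‖z‖ + ‖w‖) := by
  have hγ : 0 < γ := by linarith [abs_nonneg (arg z), hz.2.2]
  have hbetween : ∀ t ∈ Icc (0 : ℝ) 1,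
      0 < ‖z‖ + t * (‖w‖ - ‖z‖) ∧ ‖z‖ + t * (‖w‖ - ‖z‖) < E := fun t ht => by
    rcases le_total ‖z‖ ‖w‖ with h | h
    all_goals constructor <;> nlinarith [hz.1, hw.1, hz.2.1, hw.2.1,
      mul_nonneg ht.1 (sub_nonneg.2 h), mul_nonneg (sub_nonneg.2 ht.2) (sub_nonneg.2 h)]
  have hseg : ‖f ‖w‖ - f ‖z‖‖ ≤ K * (‖z‖ + ‖w‖) := by
    refine norm_sub_le_of_hasDerivAt_path hf hK
      (p := fun t : ℝ => ((‖z‖ + t * (‖w‖ - ‖z‖) : ℝ) : ℂ))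
      (p' := fun _ => ((‖w‖ - ‖z‖ : ℝ) : ℂ)) (fun t _ => ?_) (fun t _ => ?_)
      (fun t ht => ofReal_mem_sector hγ (hbetween t ht).1 (hbetween t ht).2) |>.trans_eq' ?_
    · simpa using (((hasDerivAt_id t).mul_const (‖w‖ - ‖z‖)).const_add ‖z‖).ofReal_comp
    · rw [norm_real, Real.norm_eq_abs, abs_le]
      constructor <;> linarith [hz.1, hw.1]
    · simp
  calc ‖f z - f w‖ ≤ ‖f z - f ‖z‖‖ + ‖f ‖z‖ - f ‖w‖‖ + ‖f ‖w‖ - f w‖ :=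
        (norm_sub_le_norm_sub_add_norm_sub _ (f ‖w‖) _).trans
          (add_le_add_left (norm_sub_le_norm_sub_add_norm_sub _ _ _) _)
    _ ≤ K * (π * ‖z‖) + K * (‖z‖ + ‖w‖) + K * (π * ‖w‖) :=
        add_le_add_three (norm_sub_norm_le_of_hasDerivAt_on_sector hf hK hz)
          (norm_sub_rev (f ‖z‖) _ ▸ hseg)
          (norm_sub_rev (f w) _ ▸ norm_sub_norm_le_of_hasDerivAt_on_sector hf hK hw)
    _ = (π + 1) * K * (‖z‖ + ‖w‖) := by ring

theorem norm_sub_comp_ofReal_mul_le (hS : ∀ z ∈ S, ∀ t ∈ Ioc (0 : ℝ) 1, (t : ℂ) * z ∈ S)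
    {h h' : ℂ → F} (hd : ∀ z ∈ S, HasDerivAt h (h' z) z)
    {c : ℝ} {n : ℕ} (hb : ∀ z ∈ S, ‖h' z‖ ≤ c * ‖z‖ ^ n) {z : ℂ} (hz : z ∈ S) {δ : ℝ}
    (hδ : δ ∈ Ioo (0 : ℝ) 1) :
    ‖h z - h (δ * z)‖ ≤ c * ‖z‖ ^ (n + 1) * (1 - δ ^ (n + 1)) / (n + 1) := by
  have hray : ∀ t ∈ Icc δ 1, HasDerivAt (fun t : ℝ => h (t * z)) (z • h' (t * z)) t :=
    fun t ht => by
      have hmem := hS z hz t ⟨hδ.1.trans_le ht.1, ht.2⟩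
      simpa [Function.comp_def] using
        (hd _ hmem).scomp t ((hasDerivAt_id t).ofReal_comp.mul_const z)
  have hB : ∀ t : ℝ,
      HasDerivAt (fun t => c * ‖z‖ ^ (n + 1) * (t ^ (n + 1) - δ ^ (n + 1)) / (n + 1))
        (c * ‖z‖ ^ (n + 1) * t ^ n) t := fun t => by
    refine ((((hasDerivAt_pow (n + 1) t).sub_const (δ ^ (n + 1))).const_mul
      (c * ‖z‖ ^ (n + 1))).div_const ((n : ℝ) + 1)).congr_deriv ?_
    push_cast
    field_simp
  have key := image_norm_le_of_norm_deriv_right_le_deriv_boundary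
    (f := fun t : ℝ => h (t * z) - h (δ * z)) (a := δ) (b := 1)
    (fun t ht => ((hray t ht).continuousAt.sub continuousAt_const).continuousWithinAt)
    (fun t ht => ((hray t (Ico_subset_Icc_self ht)).sub_const _).hasDerivWithinAt)
    (by simp) hB (fun t ht => ?_) (right_mem_Icc.2 hδ.2.le)
  · simpa using key
  · have ht0 : 0 ≤ t := hδ.1.le.trans ht.1
    have hmem := hS z hz t ⟨hδ.1.trans_le ht.1, ht.2.le⟩
    calc ‖z • h' (t * z)‖ ≤ ‖z‖ * (c * ‖(t : ℂ) * z‖ ^ n) := by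
          rw [norm_smul]; exact mul_le_mul_of_nonneg_left (hb _ hmem) (norm_nonneg z)
      _ = c * ‖z‖ ^ (n + 1) * t ^ n := by
          rw [norm_mul, norm_real, Real.norm_of_nonneg ht0]; ring

theorem norm_le_of_tendsto_zero_of_norm_deriv_le
    (hS : ∀ z ∈ S, ∀ t ∈ Ioc (0 : ℝ) 1, (t : ℂ) * z ∈ S) {h h' : ℂ → F}
    (hd : ∀ z ∈ S, HasDerivAt h (h' z) z) {c : ℝ} {n : ℕ} (hb : ∀ z ∈ S, ‖h' z‖ ≤ c * ‖z‖ ^ n)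
    (h0 : Tendsto h (𝓝[S] 0) (𝓝 0)) {z : ℂ} (hz : z ∈ S) :
    ‖h z‖ ≤ c * ‖z‖ ^ (n + 1) / (n + 1) := by
  have hray : Tendsto (fun δ : ℝ => (δ : ℂ) * z) (𝓝[>] 0) (𝓝[S] 0) := by
    refine tendsto_nhdsWithin_iff.2 ⟨?_, ?_⟩
    · exact ((show Continuous fun δ : ℝ => (δ : ℂ) * z by fun_prop).tendsto' 0 0 (by simp))
        |>.mono_left nhdsWithin_le_nhds
    · filter_upwards [Ioc_mem_nhdsGT zero_lt_one] with δ hδ using hS z hz δ hδ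
  have hlhs : Tendsto (fun δ : ℝ => ‖h z - h (δ * z)‖) (𝓝[>] 0) (𝓝 ‖h z - 0‖) :=
    (tendsto_const_nhds.sub (h0.comp hray)).norm
  have hrhs : Tendsto (fun δ : ℝ => c * ‖z‖ ^ (n + 1) * (1 - δ ^ (n + 1)) / (n + 1)) (𝓝[>] 0)
      (𝓝 (c * ‖z‖ ^ (n + 1) * (1 - 0 ^ (n + 1)) / (n + 1))) :=
    (((continuous_const.sub (continuous_pow (n + 1))).tendsto 0).const_mul _).div_const _
      |>.mono_left nhdsWithin_le_nhds
  have hδ : ∀ᶠ δ : ℝ in 𝓝[>] 0,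
      ‖h z - h (δ * z)‖ ≤ c * ‖z‖ ^ (n + 1) * (1 - δ ^ (n + 1)) / (n + 1) := by
    filter_upwards [Ioo_mem_nhdsGT zero_lt_one] with δ hδ
    exact norm_sub_comp_ofReal_mul_le hS hd hb hz hδ
  simpa using le_of_tendsto_of_tendsto hlhs hrhs hδ

theorem hasDerivAt_sum_pow_smul_inv_factorial_smul (a : ℕ → F) (n : ℕ) (z : ℂ) :
    HasDerivAt (fun z : ℂ => ∑ k ∈ Finset.range (n + 1), z ^ k • ((k ! : ℂ)⁻¹ • a k))
      (∑ k ∈ Finset.range n, z ^ k • ((k ! : ℂ)⁻¹ • a (k + 1))) z := by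
  induction n with
  | zero => simpa using hasDerivAt_const z (a 0)
  | succ n ih =>
    convert ih.add ((hasDerivAt_pow (n + 1) z).smul_const (((n + 1)! : ℂ)⁻¹ • a (n + 1)))
      using 1
    · ext w
      simp only [Finset.sum_range_succ _ (n + 1), Pi.add_apply]
    · rw [Finset.sum_range_succ, smul_smul, smul_smul, Nat.factorial_succ]
      congr 2
      push_cast
      field_simp

theorem norm_sub_sum_le_of_norm_iteratedDeriv_le
    (hS : ∀ z ∈ S, ∀ t ∈ Ioc (0 : ℝ) 1, (t : ℂ) * z ∈ S) {f : ℂ → F}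
    (hf : ∀ k, ∀ z ∈ S, HasDerivAt (iteratedDeriv k f) (iteratedDeriv (k + 1) f z) z)
    {n : ℕ} {a : ℕ → F} (ha : ∀ k < n, Tendsto (iteratedDeriv k f) (𝓝[S] 0) (𝓝 (a k)))
    {M : ℝ} (hM : ∀ z ∈ S, ‖iteratedDeriv n f z‖ ≤ M) {z : ℂ} (hz : z ∈ S) :
    ‖f z - ∑ k ∈ Finset.range n, z ^ k • ((k ! : ℂ)⁻¹ • a k)‖ ≤ M * ‖z‖ ^ n / n ! := by
  induction n generalizing f a M z with
  | zero => simpa using hM z hz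
  | succ n ih =>
    set P := fun z : ℂ => ∑ k ∈ Finset.range (n + 1), z ^ k • ((k ! : ℂ)⁻¹ • a k)
    have hderiv : ∀ k, ∀ z ∈ S, HasDerivAt (iteratedDeriv k (deriv f))
        (iteratedDeriv (k + 1) (deriv f) z) z := fun k z hz => by
      simpa only [← iteratedDeriv_succ'] using hf (k + 1) z hz
    have hP0 : Tendsto P (𝓝[S] 0) (𝓝 (a 0)) := by
      have := (hasDerivAt_sum_pow_smul_inv_factorial_smul a n 0).continuousAt.tendsto
      simpa [P, Finset.sum_range_succ'] using this.mono_left nhdsWithin_le_nhds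
    have h0 : Tendsto (fun z => f z - P z) (𝓝[S] 0) (𝓝 0) := by
      simpa using ((ha 0 n.succ_pos).sub hP0)
    refine (norm_le_of_tendsto_zero_of_norm_deriv_le hS (c := M / n !) (n := n)
      (h' := fun z => deriv f z - ∑ k ∈ Finset.range n, z ^ k • ((k ! : ℂ)⁻¹ • a (k + 1)))
      (fun z hz => ?_) (fun z hz => ?_) h0 hz).trans_eq ?_
    · exact (by simpa using hf 0 z hz : HasDerivAt f (deriv f z) z).sub
        (hasDerivAt_sum_pow_smul_inv_factorial_smul a n z)
    · rw [← mul_div_right_comm]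
      exact ih hderiv
        (fun k hk => by simpa only [← iteratedDeriv_succ'] using ha (k + 1) (by omega))
        (fun z hz => by simpa only [← iteratedDeriv_succ'] using hM z hz) hz
    · rw [Nat.factorial_succ]
      push_cast
      field_simp

theorem DifferentiableOn.hasDerivAt_iteratedDeriv [CompleteSpace F] {f : ℂ → F} {s : Set ℂ}
    (hf : DifferentiableOn ℂ f s) (hs : IsOpen s) (k : ℕ) {z : ℂ} (hz : z ∈ s) :
    HasDerivAt (iteratedDeriv k f) (iteratedDeriv (k + 1) f z) z := by
  rw [iteratedDeriv_succ, iteratedDeriv_eq_iterate]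
  exact ((hf.analyticOnNhd hs).iterated_deriv k z hz).differentiableAt.hasDerivAt

end

theorem stmt_15_general (ν : ℕ) (γ E C μ : ℝ)
    (g : ℂ → EuclideanSpace ℂ (Fin ν))
    (hg : DifferentiableOn ℂ g (sector γ E))
    (hbound : ∀ i : ℕ, ∀ ε ∈ sector γ E,
      ‖iteratedDeriv i g ε‖ ≤ C * (i.factorial : ℝ) ^ 2 * μ ^ i) :
    ∃ gs : ℕ → EuclideanSpace ℂ (Fin ν),
      (∀ i : ℕ,
        Filter.Tendsto (fun ε => ((i.factorial : ℂ))⁻¹ • iteratedDeriv i g ε)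
          (nhdsWithin 0 (sector γ E)) (nhds (gs i))) ∧
      ∀ I : ℕ, ∀ ε ∈ sector γ E,
        ‖g ε - ∑ i ∈ Finset.range I, ε ^ i • gs i‖ ≤
          C * (I.factorial : ℝ) * μ ^ I * ‖ε‖ ^ I := by
  have hderiv := fun k z (hz : z ∈ sector γ E) =>
    hg.hasDerivAt_iteratedDeriv (isOpen_sector γ E) k hz
  have hlim : ∀ k, ∃ L, Tendsto (iteratedDeriv k g) (𝓝[sector γ E] 0) (𝓝 L) := fun k =>
    exists_tendsto_nhdsWithin_of_dist_le fun z hz w hw => by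
      simpa only [dist_eq_norm, sub_zero] using
        norm_sub_le_of_hasDerivAt_on_sector (hderiv k) (hbound (k + 1)) hz hw
  choose L hL using hlim
  refine ⟨fun i => (i ! : ℂ)⁻¹ • L i, fun i => (hL i).const_smul _, fun I ε hε => ?_⟩
  calc _ ≤ C * (I ! : ℝ) ^ 2 * μ ^ I * ‖ε‖ ^ I / I ! :=
        norm_sub_sum_le_of_norm_iteratedDeriv_le (fun z hz t ht => ofReal_mul_mem_sector hz ht)
          hderiv (fun k _ => hL k) (hbound I) hε
    _ = C * (I ! : ℝ) * μ ^ I * ‖ε‖ ^ I := by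
        field_simp

/-- Taylor-type estimate (used in the proof of Theorem 5.1): if a holomorphic function
`g` on the sector `S(0,γ;E)` has derivatives bounded by `‖g⁽ⁱ⁾(ε)‖ ≤ C (i!)² μⁱ`, then
the limits `gᵢ = lim_{ε→0} g⁽ⁱ⁾(ε)/i!` exist and the Taylor remainders satisfy
`‖g(ε) − ∑_{i<I} gᵢ εⁱ‖ ≤ C I! μᴵ |ε|ᴵ`; i.e. `∑ gᵢ εⁱ` is a Gevrey order-1 asymptotic
expansion of `g`. -/
theorem stmt_15 (ν : ℕ) (γ E C μ : ℝ)
    (hγ : 0 < γ) (hγ2 : γ < 2 * Real.pi) (hE : 0 < E) (hC : 0 < C) (hμ : 0 < μ)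
    (g : ℂ → EuclideanSpace ℂ (Fin ν))
    (hg : DifferentiableOn ℂ g (sector γ E))
    (hbound : ∀ i : ℕ, ∀ ε ∈ sector γ E,
      ‖iteratedDeriv i g ε‖ ≤ C * (i.factorial : ℝ) ^ 2 * μ ^ i) :
    ∃ gs : ℕ → EuclideanSpace ℂ (Fin ν),
      (∀ i : ℕ,
        Filter.Tendsto (fun ε => ((i.factorial : ℂ))⁻¹ • iteratedDeriv i g ε)
          (nhdsWithin 0 (sector γ E)) (nhds (gs i))) ∧
      ∀ I : ℕ, ∀ ε ∈ sector γ E,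
        ‖g ε - ∑ i ∈ Finset.range I, ε ^ i • gs i‖ ≤
          C * (I.factorial : ℝ) * μ ^ I * ‖ε‖ ^ I :=
  stmt_15_general ν γ E C μ g hg hbound
end

section
/- Let c, C, ρ, ρ₁ be positive reals and set σ₁ = ρ₁ρ/(ρ + 4cC). Then the function φ(z) = (ρ/2)·(1 − √((1 − z/σ₁)/(1 − z/ρ₁))), defined with the principal branch of the square root, is holomorphic on the disc D_{σ₁} = {z : |z| < σ₁}, satisfies φ(0) = 0, and solves the algebraic equation φ(z)·(1 − φ(z)/ρ) = cC·(z/ρ₁)/(1 − z/ρ₁) for every z ∈ D_{σ₁}. -/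
/-!
Writing `φ = (ρ/2)(1 - s)` with `s² = w := (1 - z/σ₁)/(1 - z/ρ₁)`, one has
`φ (1 - φ/ρ) = (ρ/4)(1 - w)`, and `σ₁` is chosen so that `1/σ₁ - 1/ρ₁ = 4cC/(ρ₁ρ)`, which turns
`(ρ/4)(1 - w)` into `cC (z/ρ₁)/(1 - z/ρ₁)`. Holomorphy holds because on `|z| < σ₁ ≤ ρ₁` both
`1 - z/σ₁` and `1 - z/ρ₁` have positive real part, so `w` stays in the slit plane.
-/

open Metric

lemma Complex.div_mem_slitPlane_of_re_pos {a b : ℂ} (ha : 0 < a.re) (hb : 0 < b.re) :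
    a / b ∈ slitPlane := by
  have hb0 : b ≠ 0 := fun h => by simp [h] at hb
  rw [mem_slitPlane_iff_not_le_zero]
  intro hle
  obtain ⟨hre, him⟩ := nonpos_iff.mp hle
  have hq : a / b = ((a / b).re : ℂ) := ext rfl (by simpa using him)
  have : a.re = (a / b).re * b.re := by rw [← re_ofReal_mul, ← hq, div_mul_cancel₀ a hb0]
  nlinarith

lemma Complex.re_one_sub_div_ofReal_pos {r : ℝ} {z : ℂ} (hz : ‖z‖ < r) :
    0 < (1 - z / r).re := by
  rw [sub_re, one_re, div_ofReal_re, sub_pos, div_lt_one ((norm_nonneg z).trans_lt hz)]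
  exact (re_le_norm z).trans_lt hz

lemma Complex.differentiableOn_one_sub_div_div_one_sub_div_cpow {σ r : ℝ} (hσr : σ ≤ r) (p : ℂ) :
    DifferentiableOn ℂ (fun z : ℂ => ((1 - z / σ) / (1 - z / r)) ^ p) (ball 0 σ) := by
  intro z hz
  rw [mem_ball_zero_iff] at hz
  have hr := re_one_sub_div_ofReal_pos (hz.trans_le hσr)
  refine (DifferentiableAt.cpow_const ?_ ?_).differentiableWithinAt
  · exact (by fun_prop : DifferentiableAt ℂ (fun z : ℂ => 1 - z / σ) z).div (by fun_prop)
      (fun h => by simp [h] at hr)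
  · exact div_mem_slitPlane_of_re_pos (re_one_sub_div_ofReal_pos hz) hr

lemma mul_one_sub_half_mul_eq (ρ s : ℂ) (hρ : ρ ≠ 0) :
    ρ / 2 * (1 - s) * (1 - ρ / 2 * (1 - s) / ρ) = ρ / 4 * (1 - s ^ 2) := by
  field_simp
  ring

lemma quarter_mul_one_sub_div_eq {c C ρ ρ₁ σ z : ℂ} (hρ : ρ ≠ 0) (hρ₁ : ρ₁ ≠ 0)
    (hσ : σ = ρ₁ * ρ / (ρ + 4 * c * C)) (hz : 1 - z / ρ₁ ≠ 0) :
    ρ / 4 * (1 - (1 - z / σ) / (1 - z / ρ₁)) = c * C * (z / ρ₁) / (1 - z / ρ₁) := by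
  subst hσ
  rw [one_sub_div hρ₁] at hz ⊢
  have : ρ₁ - z ≠ 0 := (div_ne_zero_iff.mp hz).1
  field_simp
  ring

/-- Remark 3.1: the majorant `φ(z) = (ρ/2)(1 − √((1 − z/σ₁)/(1 − z/ρ₁)))` (principal
square root), with `σ₁ = ρ₁ρ/(ρ + 4cC)`, is holomorphic on `D_{σ₁}`, vanishes at `0`,
and solves `φ(1 − φ/ρ) = cC (z/ρ₁)/(1 − z/ρ₁)` there. -/
theorem stmt_18 (c C ρ ρ₁ : ℝ) (hc : 0 < c) (hC : 0 < C) (hρ : 0 < ρ) (hρ₁ : 0 < ρ₁)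
    (σ₁ : ℝ) (hσ₁ : σ₁ = ρ₁ * ρ / (ρ + 4 * c * C))
    (φ : ℂ → ℂ)
    (hφ : φ = fun z : ℂ =>
      (ρ / 2 : ℂ) * (1 - ((1 - z / (σ₁ : ℂ)) / (1 - z / (ρ₁ : ℂ))) ^ ((1 : ℂ) / 2))) :
    DifferentiableOn ℂ φ (Metric.ball 0 σ₁) ∧ φ 0 = 0 ∧
      ∀ z ∈ Metric.ball (0 : ℂ) σ₁,
        φ z * (1 - φ z / (ρ : ℂ)) = (c : ℂ) * (C : ℂ) * (z / (ρ₁ : ℂ)) / (1 - z / (ρ₁ : ℂ)) := by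
  have hσ₁ρ₁ : σ₁ ≤ ρ₁ := by
    rw [hσ₁, div_le_iff₀ (by positivity)]
    nlinarith [mul_pos hρ₁ (mul_pos hc hC)]
  subst hφ
  refine ⟨?_, by simp, fun z hz => ?_⟩
  · have hsqrt := Complex.differentiableOn_one_sub_div_div_one_sub_div_cpow hσ₁ρ₁ (1 / 2)
    exact (hsqrt.const_sub 1).const_mul _
  · have hz₁ : 1 - z / ρ₁ ≠ 0 := fun h => by
      simpa [h] using Complex.re_one_sub_div_ofReal_pos ((mem_ball_zero_iff.mp hz).trans_le hσ₁ρ₁)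
    rw [mul_one_sub_half_mul_eq _ _ (by exact_mod_cast hρ.ne'), one_div,
      Complex.cpow_ofNat_inv_pow]
    exact quarter_mul_one_sub_div_eq (by exact_mod_cast hρ.ne') (by exact_mod_cast hρ₁.ne')
      (by simp [hσ₁]) hz₁
end
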